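/- arXiv:2401.16493 — 2 statements merged into one kernel-verified Lean document; each statement's English description precedes it below -/
import Mathlib

section
/- For every k ≥ 0, Σ_{n=k}^∞ A_{n,k+1} / 4^n = 2, where A_{n,k} = ((2k-1)/(2n+1)) binomial(2n+1, n+1-k). -/
noncomputable def catalanTriangleA (n k : ℕ) : ℝ :=
  ((2 * k - 1 : ℝ)) / (2 * n + 1) * ((2 * n + 1).choose (n + 1 - k))

/-! With `m = n + k`, the term `A_{m,k+1} / 4^m` is the ballot number
`(C(2m, n) - C(2m, n-1)) / 4^m`, and Pascal's rule applied twice rewrites it as `4 (p_{n+1} - p_n)`,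
where `p_n = 4^{-m} ∑_{j<n} C(2m, j)` is the probability that a simple random walk of `2m` steps
ends below `-2k`. The series therefore telescopes to `4 lim p_n`, and `p_n → 1/2`: the endpoint
distribution is symmetric, and the `2k + 1` central values carry mass at most
`(2k + 1) C(2m, m) / 4^m = O(k / √m)`. -/

open Finset Filter Topology

namespace Nat

theorem sum_range_succ_choose_succ (N n : ℕ) :
    ∑ j ∈ range (n + 1), (N + 1).choose j = 2 * ∑ j ∈ range n, N.choose j + N.choose n := by
  induction n with
  | zero => simp
  | succ n ih => rw [sum_range_succ, ih, sum_range_succ, choose_succ_succ']; ring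

theorem sum_range_succ_choose_add_two (N n : ℕ) :
    ∑ j ∈ range (n + 1), (N + 2).choose j + (N + 1).choose n =
      4 * ∑ j ∈ range n, N.choose j + 2 * N.choose n := by
  have h₁ := sum_range_succ_choose_succ (N + 1) n
  have h₂ := sum_range_succ_choose_succ N n
  rw [sum_range_succ] at h₂
  rw [show N + 2 = N + 1 + 1 from rfl]
  omega

theorem two_mul_sum_range_choose_add_sum_Ico (n k : ℕ) :
    2 * ∑ j ∈ range n, (2 * (n + k)).choose j +
      ∑ j ∈ Ico n (n + (2 * k + 1)), (2 * (n + k)).choose j = 4 ^ (n + k) := by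
  set N := 2 * (n + k)
  have hsymm :
      ∑ j ∈ Ico (n + (2 * k + 1)) (N + 1), N.choose j = ∑ j ∈ range n, N.choose j := by
    have h := sum_Ico_reflect N.choose 0 (m := n) (n := N) (by omega)
    rw [show N + 1 - n = n + (2 * k + 1) by omega, Nat.sub_zero] at h
    rw [← h, range_eq_Ico]
    exact sum_congr rfl fun j hj => choose_symm (by simp at hj; omega)
  calc 2 * ∑ j ∈ range n, N.choose j + ∑ j ∈ Ico n (n + (2 * k + 1)), N.choose j
      = ∑ j ∈ range n, N.choose j + ∑ j ∈ Ico n (n + (2 * k + 1)), N.choose j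
          + ∑ j ∈ Ico (n + (2 * k + 1)) (N + 1), N.choose j := by rw [hsymm]; ring
    _ = ∑ j ∈ range (N + 1), N.choose j := by
      rw [sum_range_add_sum_Ico _ (by omega), sum_range_add_sum_Ico _ (by omega)]
    _ = 4 ^ (n + k) := by rw [sum_range_choose, pow_mul]; norm_num

theorem sum_Ico_choose_le_mul_centralBinom (n k : ℕ) :
    ∑ j ∈ Ico n (n + (2 * k + 1)), (2 * (n + k)).choose j ≤
      (2 * k + 1) * centralBinom (n + k) :=
  (sum_le_card_nsmul _ _ _ fun j _ => choose_le_centralBinom j (n + k)).trans_eq (by simp)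

theorem two_mul_add_one_mul_centralBinom_sq_le (m : ℕ) :
    (2 * m + 1) * centralBinom m ^ 2 ≤ 16 ^ m := by
  induction m with
  | zero => simp
  | succ m ih =>
    have h := succ_mul_centralBinom_succ m
    refine le_of_mul_le_mul_left ?_ (show 0 < (m + 1) ^ 2 by positivity)
    calc (m + 1) ^ 2 * ((2 * (m + 1) + 1) * centralBinom (m + 1) ^ 2)
        = (2 * m + 3) * ((m + 1) * centralBinom (m + 1)) ^ 2 := by ring
      _ = 4 * ((2 * m + 1) * (2 * m + 3)) * ((2 * m + 1) * centralBinom m ^ 2) := by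
          rw [h]; ring
      _ ≤ 4 * (4 * (m + 1) ^ 2) * 16 ^ m := Nat.mul_le_mul (by nlinarith) ih
      _ = (m + 1) ^ 2 * 16 ^ (m + 1) := by ring

end Nat

theorem tendsto_centralBinom_div_four_pow_atTop :
    Tendsto (fun m : ℕ => (Nat.centralBinom m : ℝ) / 4 ^ m) atTop (𝓝 0) := by
  have hsq : Tendsto (fun m : ℕ => ((Nat.centralBinom m : ℝ) / 4 ^ m) ^ 2) atTop (𝓝 0) := by
    refine squeeze_zero (fun m => by positivity) (fun m => ?_)
      tendsto_one_div_add_atTop_nhds_zero_nat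
    have h : ((2 * m + 1 : ℕ) : ℝ) * (Nat.centralBinom m : ℝ) ^ 2 ≤ (16 : ℝ) ^ m := by
      exact_mod_cast Nat.two_mul_add_one_mul_centralBinom_sq_le m
    rw [div_pow, ← pow_mul, show (4 : ℝ) ^ (m * 2) = 16 ^ m by rw [pow_mul']; norm_num,
      div_le_div_iff₀ (by positivity) (by positivity)]
    push_cast at h
    nlinarith [sq_nonneg (Nat.centralBinom m : ℝ)]
  have h := hsq.sqrt
  rw [Real.sqrt_zero] at h
  exact h.congr fun m => Real.sqrt_sq (by positivity)

noncomputable def lowerTail (k n : ℕ) : ℝ :=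
  (∑ j ∈ range n, (2 * (n + k)).choose j : ℕ) / 4 ^ (n + k)

theorem lowerTail_zero (k : ℕ) : lowerTail k 0 = 0 := by
  simp [lowerTail]

theorem tendsto_lowerTail (k : ℕ) : Tendsto (lowerTail k) atTop (𝓝 (1 / 2)) := by
  have hlower : Tendsto (fun n => 1 / 2 - (2 * k + 1) / 2 *
      ((Nat.centralBinom (n + k) : ℝ) / 4 ^ (n + k))) atTop (𝓝 (1 / 2)) := by
    simpa using
      ((tendsto_centralBinom_div_four_pow_atTop.comp (tendsto_add_atTop_nat k)).const_mul
        ((2 * k + 1) / 2 : ℝ)).const_sub (1 / 2 : ℝ)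
  have hbounds (n : ℕ) :
      1 / 2 - (2 * k + 1) / 2 * ((Nat.centralBinom (n + k) : ℝ) / 4 ^ (n + k)) ≤
        lowerTail k n ∧ lowerTail k n ≤ 1 / 2 := by
    have hsum := Nat.two_mul_sum_range_choose_add_sum_Ico n k
    have hle := Nat.sum_Ico_choose_le_mul_centralBinom n k
    have hmid : (0 : ℝ) ≤ ∑ j ∈ Ico n (n + (2 * k + 1)), ((2 * (n + k)).choose j : ℝ) :=
      by positivity
    rw [← Nat.cast_le (α := ℝ)] at hle
    apply_fun (Nat.cast : ℕ → ℝ) at hsum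
    push_cast at hsum hle
    rw [lowerTail]
    push_cast
    constructor <;> field_simp <;> linarith
  exact tendsto_of_tendsto_of_tendsto_of_le_of_le hlower tendsto_const_nhds
    (fun n => (hbounds n).1) fun n => (hbounds n).2

theorem catalanTriangleA_nonneg (n : ℕ) {k : ℕ} (hk : 0 < k) : 0 ≤ catalanTriangleA n k := by
  have hk : (1 : ℝ) ≤ k := by exact_mod_cast hk
  exact mul_nonneg (div_nonneg (by linarith) (by positivity)) (by positivity)

theorem catalanTriangleA_add_succ (n k : ℕ) :
    catalanTriangleA (n + k) (k + 1) =
      2 * (2 * (n + k)).choose n - (2 * (n + k) + 1).choose n := by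
  have h := Nat.choose_mul_succ_eq (2 * (n + k)) n
  rw [show 2 * (n + k) + 1 - n = n + 2 * k + 1 by omega] at h
  have hR : ((2 * (n + k)).choose n : ℝ) * (2 * (n + k) + 1) =
      ((2 * (n + k) + 1).choose n : ℝ) * (n + 2 * k + 1) := by exact_mod_cast h
  rw [catalanTriangleA, show n + k + 1 - (k + 1) = n by omega]
  field_simp
  push_cast
  linear_combination (-2) * hR

theorem catalanTriangleA_div_four_pow_eq (n k : ℕ) :
    catalanTriangleA (n + k) (k + 1) / 4 ^ (n + k) =
      4 * (lowerTail k (n + 1) - lowerTail k n) := by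
  have h := Nat.sum_range_succ_choose_add_two (2 * (n + k)) n
  rw [show 2 * (n + k) + 2 = 2 * (n + 1 + k) by ring] at h
  have hR := congrArg (Nat.cast : ℕ → ℝ) h
  push_cast at hR
  have h4 : (4 : ℝ) ^ (n + 1 + k) = 4 * 4 ^ (n + k) := by
    rw [show n + 1 + k = n + k + 1 by omega, pow_succ, mul_comm]
  rw [catalanTriangleA_add_succ, lowerTail, lowerTail, h4]
  field_simp
  push_cast
  linear_combination (-1) * hR

theorem catalanTriangleA_column_sum (k : ℕ) :
    (∑' n : ℕ, catalanTriangleA (n + k) (k + 1) / 4 ^ (n + k)) = 2 := by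
  have hnonneg (n : ℕ) : 0 ≤ catalanTriangleA (n + k) (k + 1) / 4 ^ (n + k) := by
    have := catalanTriangleA_nonneg (n + k) k.succ_pos
    positivity
  have hpartial (N : ℕ) :
      ∑ n ∈ range N, catalanTriangleA (n + k) (k + 1) / 4 ^ (n + k) = 4 * lowerTail k N := by
    simp_rw [catalanTriangleA_div_four_pow_eq, ← mul_sum, sum_range_sub, lowerTail_zero, sub_zero]
  refine ((hasSum_iff_tendsto_nat_of_nonneg hnonneg 2).2 ?_).tsum_eq
  simp_rw [hpartial]
  convert (tendsto_lowerTail k).const_mul 4 using 2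
  norm_num
end

section
/- Define polynomials P_n(z) = Σ_{j=0}^{n} B_{n+1,j+1} z^j. Then P_0 = 1 and for n ≥ 1, z P_n(z) + C_n = (z+1)² P_{n-1}(z) as an identity of polynomials, where C_n is the n-th Catalan number. -/
noncomputable def catalanTriangleB (n k : ℕ) : ℚ :=
  (k : ℚ) / n * ((2 * n).choose (n - k))

noncomputable def catalanQ (n : ℕ) : ℚ := ((2 * n).choose n : ℚ) / (n + 1)

noncomputable def rowPolyP (n : ℕ) : Polynomial ℚ :=
  ∑ j ∈ Finset.range (n + 1), Polynomial.C (catalanTriangleB (n + 1) (j + 1)) * Polynomial.X ^ j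

lemma coeff_rowPolyP (n k : ℕ) :
    (rowPolyP n).coeff k = ((k : ℚ)+1)/((n : ℚ)+1) * ((2*n+2).choose (n+k+2)) := by
  unfold rowPolyP
  rw [Polynomial.finset_sum_coeff]
  simp only [Polynomial.coeff_C_mul, Polynomial.coeff_X_pow, mul_ite, mul_one, mul_zero]
  rw [Finset.sum_ite_eq (Finset.range (n+1)) k]
  rcases le_or_gt k n with h | h
  · rw [if_pos (Finset.mem_range.mpr (by omega))]
    unfold catalanTriangleB
    have h1 : (n + 1) - (k + 1) = (2*(n+1)) - (n+k+2) := by omega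
    have h2 : n + k + 2 ≤ 2*(n+1) := by omega
    rw [h1, Nat.choose_symm h2]
    push_cast
    ring_nf
  · rw [if_neg (by simp; omega)]
    rw [Nat.choose_eq_zero_of_lt (by omega)]
    simp

lemma core (n m : ℕ) (hn : n ≠ 0) :
    ((m:ℚ)+1)/((n:ℚ)+1) * ((2*n+2).choose (n+m+2)) =
      (((m:ℚ)+2) * ((2*n).choose (n+m+2)) + 2*((m:ℚ)+1) * ((2*n).choose (n+m+1))
        + (m:ℚ) * ((2*n).choose (n+m))) / (n:ℚ) := by
  have hn' : (n:ℚ) ≠ 0 := Nat.cast_ne_zero.mpr hn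
  have hn1 : (n:ℚ) + 1 ≠ 0 := by positivity
  have e3 : ((2*n+2).choose (n+m+2) : ℚ)
      = ((2*n).choose (n+m) : ℚ) + 2 * ((2*n).choose (n+m+1)) + ((2*n).choose (n+m+2)) := by
    have h1 : (2*n+2).choose (n+m+2) = (2*n+1).choose (n+m+1) + (2*n+1).choose (n+m+2) :=
      Nat.choose_succ_succ (2*n+1) (n+m+1)
    have h2 : (2*n+1).choose (n+m+1) = (2*n).choose (n+m) + (2*n).choose (n+m+1) :=
      Nat.choose_succ_succ (2*n) (n+m)
    have h3 : (2*n+1).choose (n+m+2) = (2*n).choose (n+m+1) + (2*n).choose (n+m+2) :=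
      Nat.choose_succ_succ (2*n) (n+m+1)
    have : (2*n+2).choose (n+m+2) = (2*n).choose (n+m) + 2 * ((2*n).choose (n+m+1)) + (2*n).choose (n+m+2) := by
      omega
    rw [this]; push_cast; ring
  have f1 : ((2*n:ℚ)+1) * ((2*n).choose (n+m)) = ((n:ℚ)+m+1) * (((2*n).choose (n+m)) + ((2*n).choose (n+m+1))) := by
    have h := Nat.add_one_mul_choose_eq (2*n) (n+m)
    have h2 : (2*n+1).choose (n+m+1) = (2*n).choose (n+m) + (2*n).choose (n+m+1) :=
      Nat.choose_succ_succ (2*n) (n+m)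
    have h' : (2*n+1) * ((2*n).choose (n+m)) = ((2*n).choose (n+m) + (2*n).choose (n+m+1)) * (n+m+1) := by
      simpa [h2, Nat.succ_eq_add_one] using h
    have := congrArg (Nat.cast : ℕ → ℚ) h'
    push_cast at this
    linarith [this]
  have f2 : ((2*n:ℚ)+1) * ((2*n).choose (n+m+1)) = ((n:ℚ)+m+2) * (((2*n).choose (n+m+1)) + ((2*n).choose (n+m+2))) := by
    have h := Nat.add_one_mul_choose_eq (2*n) (n+m+1)
    have h2 : (2*n+1).choose (n+m+2) = (2*n).choose (n+m+1) + (2*n).choose (n+m+2) :=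
      Nat.choose_succ_succ (2*n) (n+m+1)
    have h' : (2*n+1) * ((2*n).choose (n+m+1)) = ((2*n).choose (n+m+1) + (2*n).choose (n+m+2)) * (n+m+2) := by
      simpa [h2, Nat.succ_eq_add_one] using h
    have := congrArg (Nat.cast : ℕ → ℚ) h'
    push_cast at this
    linarith [this]
  rw [e3]
  field_simp
  ring_nf
  ring_nf at f1 f2
  linear_combination f1 + f2

theorem rowPolyP_recurrence :
    rowPolyP 0 = 1 ∧
      ∀ n : ℕ, 1 ≤ n →
        Polynomial.X * rowPolyP n + Polynomial.C (catalanQ n) =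
          (Polynomial.X + 1) ^ 2 * rowPolyP (n - 1) := by
  constructor
  · simp [rowPolyP, catalanTriangleB]
  · intro n hn
    obtain ⟨n', rfl⟩ : ∃ n', n = n' + 1 := ⟨n - 1, by omega⟩
    simp only [Nat.add_sub_cancel]
    set P := rowPolyP (n' + 1) with hP
    set Q := rowPolyP n' with hQ
    have hrw : (Polynomial.X + 1) ^ 2 * Q
        = Q * Polynomial.X ^ 2 + Q * Polynomial.X ^ 1 + Q * Polynomial.X ^ 1 + Q := by ring
    have hrw2 : Polynomial.X * P = P * Polynomial.X ^ 1 := by ring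
    rw [hrw, hrw2]
    ext m
    simp only [Polynomial.coeff_add, Polynomial.coeff_mul_X_pow', Polynomial.coeff_C]
    match m with
    | 0 =>
      simp only [if_neg (by omega : ¬ (1:ℕ) ≤ 0), if_neg (by omega : ¬ (2:ℕ) ≤ 0),
        if_pos rfl]
      rw [hQ, coeff_rowPolyP]
      unfold catalanQ
      have h := Nat.choose_succ_right_eq (2*(n'+1)) (n'+1)
      have h2 : 2*(n'+1) - (n'+1) = n'+1 := by omega
      rw [h2] at h
      have hc := congrArg (Nat.cast : ℕ → ℚ) h
      push_cast at hc ⊢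
      ring_nf at hc ⊢
      have hpos1 : ((n':ℚ) + 1) ≠ 0 := by positivity
      have hpos2 : ((n':ℚ) + 2) ≠ 0 := by positivity
      field_simp at hc ⊢
      ring_nf at hc ⊢
      nlinarith [hc]
    | (k+1) =>
      simp only [if_pos (by omega : (1:ℕ) ≤ k+1), if_neg (by omega : ¬ (k+1 = 0)),
        Nat.add_sub_cancel]
      have hcore := core (n'+1) k (by omega)
      match k with
      | 0 =>
        simp only [if_neg (by omega : ¬ (2:ℕ) ≤ 1), hP, hQ, coeff_rowPolyP]
        push_cast at hcore ⊢
        ring_nf at hcore ⊢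
        have hpos : ((n':ℚ)+1) ≠ 0 := by positivity
        have hpos2 : ((n':ℚ)+2) ≠ 0 := by positivity
        field_simp at hcore ⊢
        ring_nf at hcore ⊢
        linarith [hcore]
      | (k'+1) =>
        simp only [if_pos (by omega : (2:ℕ) ≤ k'+2), Nat.add_sub_cancel, hP, hQ, coeff_rowPolyP]
        push_cast at hcore ⊢
        ring_nf at hcore ⊢
        have hpos : ((n':ℚ)+1) ≠ 0 := by positivity
        have hpos2 : ((n':ℚ)+2) ≠ 0 := by positivity
        field_simp at hcore ⊢
        ring_nf at hcore ⊢
        linarith [hcore]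
end
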